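/- arXiv:1411.1182 — 7 statements merged into one kernel-verified Lean document; each statement's English description precedes it below -/
import Mathlib

section
/- Let I ⊆ ℝ be an open interval and let u : ℝ → ℂ be twice differentiable on I satisfying the complex modified Emden equation u″(x) + 3·u(x)·u′(x) + u(x)³ = 0 for all x ∈ I. Assume u(x)² + u′(x) ≠ 0 for all x ∈ I. Then the function x ↦ x − u(x)/(u(x)² + u′(x)) is constant on I. -/
/-!
Differentiating, the derivative of `x - u / (u² + u')` is
`((u² + u')² - u' (u² + u') + u (2 u u' + u'')) / (u² + u')²`, whose numerator simplifies to
`u (u'' + 3 u u' + u³)`; it therefore vanishes along solutions of the modified Emden equation,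
and a function with vanishing derivative on an interval is constant.
-/

theorem Convex.eq_of_forall_hasDerivWithinAt_zero {𝕜 G : Type*} [RCLike 𝕜]
    [NormedAddCommGroup G] [NormedSpace 𝕜 G] {f : 𝕜 → G} {s : Set 𝕜} {x y : 𝕜}
    (hs : Convex ℝ s) (hf : ∀ z ∈ s, HasDerivWithinAt f 0 s z) (hx : x ∈ s) (hy : y ∈ s) :
    f x = f y := by
  have h := hs.norm_image_sub_le_of_norm_hasDerivWithin_le hf (fun _ _ ↦ norm_zero.le) hy hx
  rwa [zero_mul, norm_le_zero_iff, sub_eq_zero] at h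

/-- `dU/dχ` in the linearizing coordinates `χ = x - 1/u`, `U = x²/2 - x/u`. -/
noncomputable def emdenFirstIntegral (u u' : ℝ → ℂ) (x : ℝ) : ℂ :=
  x - u x / (u x ^ 2 + u' x)

theorem hasDerivAt_emdenFirstIntegral {u u' : ℝ → ℂ} {u'' : ℂ} {x : ℝ}
    (hu : HasDerivAt u (u' x) x) (hu' : HasDerivAt u' u'' x)
    (hode : u'' + 3 * u x * u' x + u x ^ 3 = 0) (hne : u x ^ 2 + u' x ≠ 0) :
    HasDerivAt (emdenFirstIntegral u u') 0 x := by
  have hden : HasDerivAt (fun y ↦ u y ^ 2 + u' y) (2 * u x * u' x + u'') x :=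
    ((hu.pow 2).add hu').congr_deriv (by norm_num)
  have hid : HasDerivAt (fun y : ℝ ↦ (y : ℂ)) 1 x := (hasDerivAt_id x).ofReal_comp
  refine (hid.sub (hu.div hden hne)).congr_deriv ?_
  field_simp
  linear_combination u x * hode

theorem stmt_4_general (I : Set ℝ) (hIint : I.OrdConnected)
    (u : ℝ → ℂ)
    (hu : ∀ x ∈ I, DifferentiableAt ℝ u x)
    (hu' : ∀ x ∈ I, DifferentiableAt ℝ (deriv u) x)
    (hode : ∀ x ∈ I, deriv (deriv u) x + 3 * u x * deriv u x + (u x) ^ 3 = 0)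
    (hne : ∀ x ∈ I, (u x) ^ 2 + deriv u x ≠ 0) :
    ∃ C : ℂ, ∀ x ∈ I, (x : ℂ) - u x / ((u x) ^ 2 + deriv u x) = C := by
  rcases I.eq_empty_or_nonempty with rfl | ⟨x₀, hx₀⟩
  · exact ⟨0, fun _ ↦ False.elim⟩
  have hderiv (x : ℝ) (hx : x ∈ I) : HasDerivAt (emdenFirstIntegral u (deriv u)) 0 x :=
    hasDerivAt_emdenFirstIntegral (hu x hx).hasDerivAt (hu' x hx).hasDerivAt (hode x hx) (hne x hx)
  exact ⟨emdenFirstIntegral u (deriv u) x₀, fun x hx ↦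
    hIint.convex.eq_of_forall_hasDerivWithinAt_zero (fun z hz ↦ (hderiv z hz).hasDerivWithinAt)
      hx hx₀⟩

/-- First integral of the complex modified Emden equation:
`x ↦ x - u/(u² + u')` is constant along solutions. -/
theorem stmt_4 (I : Set ℝ) (hIopen : IsOpen I) (hIint : I.OrdConnected)
    (u : ℝ → ℂ)
    (hu : ∀ x ∈ I, DifferentiableAt ℝ u x)
    (hu' : ∀ x ∈ I, DifferentiableAt ℝ (deriv u) x)
    (hode : ∀ x ∈ I, deriv (deriv u) x + 3 * u x * deriv u x + (u x) ^ 3 = 0)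
    (hne : ∀ x ∈ I, (u x) ^ 2 + deriv u x ≠ 0) :
    ∃ C : ℂ, ∀ x ∈ I, (x : ℂ) - u x / ((u x) ^ 2 + deriv u x) = C :=
  stmt_4_general I hIint u hu hu' hode hne
end

section
/- Let a, c ∈ ℂ and let I ⊆ ℝ be an open interval such that x² − 2·a·x + c ≠ 0 (as a complex number) for all x ∈ I. Then the function u : ℝ → ℂ defined by u(x) = 2(x − a)/(x² − 2·a·x + c) satisfies the complex modified Emden equation u″(x) + 3·u(x)·u′(x) + u(x)³ = 0 for all x ∈ I. -/
/-!
With `q x = x² - 2ax + c` one has `u = q'/q`. The substitution `u = w'/w` linearizes the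
modified Emden equation, `u'' + 3uu' + u³ = w'''/w`, and `q''' = 0` since `q` is quadratic.
-/

open Filter Topology

section Riccati

variable {𝕜 𝕜' : Type*} [NontriviallyNormedField 𝕜] [NontriviallyNormedField 𝕜']
  [NormedAlgebra 𝕜 𝕜'] {w w₁ w₂ : 𝕜 → 𝕜'} {x : 𝕜}

theorem HasDerivAt.div_riccati {w₂x : 𝕜'} (hw : HasDerivAt w (w₁ x) x)
    (hw₁ : HasDerivAt w₁ w₂x x) (hx : w x ≠ 0) :
    HasDerivAt (fun y => w₁ y / w y) (w₂x / w x - (w₁ x / w x) ^ 2) x := by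
  convert hw₁.fun_div hw hx using 1
  field_simp

theorem deriv_deriv_add_three_mul_add_pow_three_of_div {w₃ : 𝕜'}
    (hw : ∀ᶠ y in 𝓝 x, HasDerivAt w (w₁ y) y ∧ HasDerivAt w₁ (w₂ y) y ∧ w y ≠ 0)
    (hw₂ : HasDerivAt w₂ w₃ x) :
    let u := fun y => w₁ y / w y
    deriv (deriv u) x + 3 * u x * deriv u x + u x ^ 3 = w₃ / w x := by
  intro u
  have hu' : deriv u =ᶠ[𝓝 x] fun y => w₂ y / w y - u y ^ 2 := by
    filter_upwards [hw] with y ⟨hwy, hw₁y, hy⟩ using (hwy.div_riccati hw₁y hy).deriv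
  obtain ⟨hwx, hw₁x, hx⟩ := hw.self_of_nhds
  have hux := hwx.div_riccati hw₁x hx
  have hu'x : HasDerivAt (fun y => w₂ y / w y - u y ^ 2) _ x :=
    (hw₂.fun_div hwx hx).sub (hux.pow 2)
  rw [hu'.deriv_eq, hu'x.deriv, hux.deriv]
  simp only [u]
  norm_num
  field_simp
  ring

end Riccati

theorem hasDerivAt_ofReal_sq_sub_mul_add (a c : ℂ) (x : ℝ) :
    HasDerivAt (fun t : ℝ => (t : ℂ) ^ 2 - 2 * a * t + c) (2 * ((x : ℂ) - a)) x := by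
  have h : HasDerivAt (fun t : ℝ => (t : ℂ)) 1 x := (hasDerivAt_id x).ofReal_comp
  have hq : HasDerivAt (fun t : ℝ => (t : ℂ) ^ 2 - 2 * a * t + c) _ x :=
    ((h.pow 2).sub (h.const_mul (2 * a))).add_const c
  convert hq using 1
  norm_num
  ring

theorem stmt_5_general (a c : ℂ) (I : Set ℝ) (hIopen : IsOpen I)
    (hne : ∀ x ∈ I, (x : ℂ) ^ 2 - 2 * a * (x : ℂ) + c ≠ 0)
    (u : ℝ → ℂ)
    (hu : ∀ x : ℝ, u x = 2 * ((x : ℂ) - a) / ((x : ℂ) ^ 2 - 2 * a * (x : ℂ) + c)) :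
    ∀ x ∈ I, deriv (deriv u) x + 3 * u x * deriv u x + (u x) ^ 3 = 0 := by
  intro x hx
  obtain rfl : u = fun t : ℝ => 2 * ((t : ℂ) - a) / ((t : ℂ) ^ 2 - 2 * a * t + c) :=
    funext hu
  have hq : ∀ᶠ y : ℝ in 𝓝 x, HasDerivAt (fun t : ℝ => (t : ℂ) ^ 2 - 2 * a * t + c)
      (2 * ((y : ℂ) - a)) y ∧ HasDerivAt (fun t : ℝ => 2 * ((t : ℂ) - a)) 2 y ∧
      (y : ℂ) ^ 2 - 2 * a * y + c ≠ 0 := by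
    filter_upwards [hIopen.mem_nhds hx] with y hy
    exact ⟨hasDerivAt_ofReal_sq_sub_mul_add a c y,
      by simpa using ((hasDerivAt_id y).ofReal_comp.sub_const a).const_mul 2, hne y hy⟩
  simpa using deriv_deriv_add_three_mul_add_pow_three_of_div hq (hasDerivAt_const x (2 : ℂ))

/-- The explicit two-parameter family `u(x) = 2(x-a)/(x² - 2ax + c)` solves the
complex modified Emden equation `u'' + 3uu' + u³ = 0`. -/
theorem stmt_5 (a c : ℂ) (I : Set ℝ) (hIopen : IsOpen I) (hIint : I.OrdConnected)
    (hne : ∀ x ∈ I, (x : ℂ) ^ 2 - 2 * a * (x : ℂ) + c ≠ 0)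
    (u : ℝ → ℂ)
    (hu : ∀ x : ℝ, u x = 2 * ((x : ℂ) - a) / ((x : ℂ) ^ 2 - 2 * a * (x : ℂ) + c)) :
    ∀ x ∈ I, deriv (deriv u) x + 3 * u x * deriv u x + (u x) ^ 3 = 0 :=
  stmt_5_general a c I hIopen hne u hu
end

section
/- Let a₁, a₂, b₁, b₂ ∈ ℝ, define D(x) = x⁴ − 4a₁x³ + 4((a₂² + a₁² − b₁)x² + 2(a₂b₂ + a₁b₁)x + b₁² + b₂²), and let I ⊆ ℝ be an open interval on which D(x) ≠ 0. Define f₁(x) = (2x³ − 6a₁x² + 4(a₂² + a₁² − b₁)x + 4a₁b₁ + 4a₂b₂)/D(x) and f₂(x) = ((2x² + 4b₁)a₂ + 4b₂(x − a₁))/D(x). Then for all x ∈ I the pair (f₁, f₂) satisfies the coupled modified Emden system f₁″ = −3f₁f₁′ + 3f₂f₂′ − f₁³ + 3f₁f₂² and f₂″ = −3f₂f₁′ − 3f₁f₂′ + f₂³ − 3f₁²f₂. -/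
/-! The system is the real form of the complex modified Emden equation `w'' + 3 w w' + w³ = 0`
for `w = f₁ + i f₂`, which the substitution `w = u'/u` linearises to `u''' = 0`. Here
`f₁ + i f₂ = P'/P` for the quadratic `P(x) = x² - 2(a₁ + i a₂) x - 2(b₁ + i b₂)`, and `D = |P|²`.
For quadratic `u = a x² + …` the computation closes up: `w' = 2a/u - w²` and `(1/u)' = -w/u`. -/

open Complex Filter Topology

section Quadratic

variable {a b c : ℂ} {x : ℝ}

def quadratic (a b c : ℂ) (x : ℝ) : ℂ := a * x ^ 2 + b * x + c

theorem hasDerivAt_quadratic : HasDerivAt (quadratic a b c) (2 * a * x + b) x := by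
  have hx : HasDerivAt (fun y : ℝ => (y : ℂ)) 1 x := (hasDerivAt_id x).ofReal_comp
  refine (((hx.pow 2).const_mul a).add (hx.const_mul b) |>.add_const c).congr_deriv ?_
  ring

theorem eventually_quadratic_ne_zero (h : quadratic a b c x ≠ 0) :
    ∀ᶠ y in 𝓝 x, quadratic a b c y ≠ 0 :=
  hasDerivAt_quadratic.continuousAt.eventually_ne h

theorem logDeriv_quadratic :
    logDeriv (quadratic a b c) x = (2 * a * x + b) / quadratic a b c x := by
  rw [logDeriv_apply, hasDerivAt_quadratic.deriv]

theorem hasDerivAt_inv_quadratic (h : quadratic a b c x ≠ 0) :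
    HasDerivAt (fun y => (quadratic a b c y)⁻¹)
      (-(logDeriv (quadratic a b c) x * (quadratic a b c x)⁻¹)) x := by
  refine (hasDerivAt_quadratic.inv h).congr_deriv ?_
  rw [logDeriv_quadratic]
  field_simp

theorem hasDerivAt_logDeriv_quadratic (h : quadratic a b c x ≠ 0) :
    HasDerivAt (logDeriv (quadratic a b c))
      (2 * a * (quadratic a b c x)⁻¹ - logDeriv (quadratic a b c) x ^ 2) x := by
  have hnum : HasDerivAt (fun y : ℝ => 2 * a * y + b) (2 * a) x := by
    simpa using ((hasDerivAt_id x).ofReal_comp.const_mul (2 * a)).add_const b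
  refine ((hnum.div hasDerivAt_quadratic h).congr_of_eventuallyEq
    (Eventually.of_forall fun y => logDeriv_quadratic)).congr_deriv ?_
  rw [logDeriv_quadratic]
  field_simp

theorem hasDerivAt_deriv_logDeriv_quadratic (h : quadratic a b c x ≠ 0) :
    HasDerivAt (deriv (logDeriv (quadratic a b c)))
      (-3 * logDeriv (quadratic a b c) x * deriv (logDeriv (quadratic a b c)) x -
        logDeriv (quadratic a b c) x ^ 3) x := by
  set w := logDeriv (quadratic a b c)
  have hderiv : deriv w =ᶠ[𝓝 x] fun y => 2 * a * (quadratic a b c y)⁻¹ - w y ^ 2 :=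
    (eventually_quadratic_ne_zero h).mono fun y hy => (hasDerivAt_logDeriv_quadratic hy).deriv
  have hw := hasDerivAt_logDeriv_quadratic h
  refine ((((hasDerivAt_inv_quadratic h).const_mul (2 * a)).sub (hw.pow 2)).congr_of_eventuallyEq
    hderiv).congr_deriv ?_
  rw [hderiv.eq_of_nhds]
  ring

end Quadratic

section LinearMapComp

variable {𝕜 E F : Type*} [NontriviallyNormedField 𝕜] [NormedAddCommGroup E] [NormedSpace 𝕜 E]
  [NormedAddCommGroup F] [NormedSpace 𝕜 F] (L : E →L[𝕜] F) {w : 𝕜 → E} {x : 𝕜}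

theorem ContinuousLinearMap.deriv_comp_eventuallyEq
    (hw : ∀ᶠ y in 𝓝 x, DifferentiableAt 𝕜 w y) : deriv (L ∘ w) =ᶠ[𝓝 x] L ∘ deriv w :=
  hw.mono fun y hy => (L.hasFDerivAt.comp_hasDerivAt y hy.hasDerivAt).deriv

theorem ContinuousLinearMap.deriv_deriv_comp (hw : ∀ᶠ y in 𝓝 x, DifferentiableAt 𝕜 w y)
    (hw' : DifferentiableAt 𝕜 (deriv w) x) :
    deriv (deriv (L ∘ w)) x = L (deriv (deriv w) x) := by
  rw [(L.deriv_comp_eventuallyEq hw).deriv_eq]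
  exact (L.hasFDerivAt.comp_hasDerivAt x hw'.hasDerivAt).deriv

end LinearMapComp

theorem Complex.re_modifiedEmden (z z' : ℂ) :
    (-3 * z * z' - z ^ 3).re =
      -3 * z.re * z'.re + 3 * z.im * z'.im - z.re ^ 3 + 3 * z.re * z.im ^ 2 := by
  simp only [sub_re, mul_re, mul_im, pow_succ, pow_zero, one_mul, neg_re, neg_im, re_ofNat,
    im_ofNat]
  ring

theorem Complex.im_modifiedEmden (z z' : ℂ) :
    (-3 * z * z' - z ^ 3).im =
      -3 * z.im * z'.re - 3 * z.re * z'.im + z.im ^ 3 - 3 * z.re ^ 2 * z.im := by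
  simp only [sub_im, mul_re, mul_im, pow_succ, pow_zero, one_mul, neg_re, neg_im, re_ofNat,
    im_ofNat]
  ring

theorem stmt_7_general (a₁ a₂ b₁ b₂ : ℝ) (D f₁ f₂ : ℝ → ℝ)
    (hD : ∀ x : ℝ, D x =
      x ^ 4 - 4 * a₁ * x ^ 3 +
        4 * ((a₂ ^ 2 + a₁ ^ 2 - b₁) * x ^ 2 + 2 * (a₂ * b₂ + a₁ * b₁) * x + b₁ ^ 2 + b₂ ^ 2))
    (I : Set ℝ)
    (hne : ∀ x ∈ I, D x ≠ 0)
    (hf₁ : ∀ x : ℝ, f₁ x =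
      (2 * x ^ 3 - 6 * a₁ * x ^ 2 + 4 * (a₂ ^ 2 + a₁ ^ 2 - b₁) * x + 4 * a₁ * b₁ + 4 * a₂ * b₂) / D x)
    (hf₂ : ∀ x : ℝ, f₂ x = ((2 * x ^ 2 + 4 * b₁) * a₂ + 4 * b₂ * (x - a₁)) / D x) :
    ∀ x ∈ I,
      deriv (deriv f₁) x =
        -3 * f₁ x * deriv f₁ x + 3 * f₂ x * deriv f₂ x - (f₁ x) ^ 3 + 3 * f₁ x * (f₂ x) ^ 2 ∧
      deriv (deriv f₂) x =
        -3 * f₂ x * deriv f₁ x - 3 * f₁ x * deriv f₂ x + (f₂ x) ^ 3 - 3 * (f₁ x) ^ 2 * f₂ x := by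
  intro x hx
  set c : ℂ := -2 * (a₁ + a₂ * Complex.I)
  set d : ℂ := -2 * (b₁ + b₂ * Complex.I)
  have hP : ∀ y : ℝ, quadratic 1 c d y = ⟨y ^ 2 - 2 * a₁ * y - 2 * b₁, -2 * a₂ * y - 2 * b₂⟩ :=
    fun y => by
      apply Complex.ext <;>
        simp only [quadratic, c, d, sq, add_re, add_im, mul_re, mul_im, neg_re, neg_im, ofReal_re,
          ofReal_im, re_ofNat, im_ofNat, one_re, one_im, I_re, I_im] <;> ring
  have hP' : ∀ y : ℝ, 2 * 1 * (y : ℂ) + c = ⟨2 * y - 2 * a₁, -2 * a₂⟩ := fun y => by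
    apply Complex.ext <;>
      simp only [c, add_re, add_im, mul_re, mul_im, neg_re, neg_im, ofReal_re, ofReal_im, re_ofNat,
        im_ofNat, one_re, one_im, I_re, I_im] <;> ring
  have hD_normSq : ∀ y, D y = normSq (quadratic 1 c d y) := fun y => by
    rw [hD, hP, normSq_mk]
    ring
  have hf₁_re : f₁ = reCLM ∘ logDeriv (quadratic 1 c d) := funext fun y => by
    rw [hf₁, hD_normSq, Function.comp_apply, reCLM_apply, logDeriv_quadratic, div_re, ← add_div,
      hP, hP']
    ring
  have hf₂_im : f₂ = imCLM ∘ logDeriv (quadratic 1 c d) := funext fun y => by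
    rw [hf₂, hD_normSq, Function.comp_apply, imCLM_apply, logDeriv_quadratic, div_im, ← sub_div,
      hP, hP']
    ring
  have hPx : quadratic 1 c d x ≠ 0 := fun h => hne x hx (by rw [hD_normSq, h, map_zero])
  have hw : ∀ᶠ y in 𝓝 x, DifferentiableAt ℝ (logDeriv (quadratic 1 c d)) y :=
    (eventually_quadratic_ne_zero hPx).mono fun y hy =>
      (hasDerivAt_logDeriv_quadratic hy).differentiableAt
  have hw'' := hasDerivAt_deriv_logDeriv_quadratic hPx
  rw [hf₁_re, hf₂_im, reCLM.deriv_deriv_comp hw hw''.differentiableAt,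
    imCLM.deriv_deriv_comp hw hw''.differentiableAt, (reCLM.deriv_comp_eventuallyEq hw).eq_of_nhds,
    (imCLM.deriv_comp_eventuallyEq hw).eq_of_nhds, hw''.deriv]
  exact ⟨re_modifiedEmden _ _, im_modifiedEmden _ _⟩

/-- The explicit four-parameter solution of the coupled modified Emden system (sys7). -/
theorem stmt_7 (a₁ a₂ b₁ b₂ : ℝ) (D f₁ f₂ : ℝ → ℝ)
    (hD : ∀ x : ℝ, D x =
      x ^ 4 - 4 * a₁ * x ^ 3 +
        4 * ((a₂ ^ 2 + a₁ ^ 2 - b₁) * x ^ 2 + 2 * (a₂ * b₂ + a₁ * b₁) * x + b₁ ^ 2 + b₂ ^ 2))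
    (I : Set ℝ) (hIopen : IsOpen I) (hIint : I.OrdConnected)
    (hne : ∀ x ∈ I, D x ≠ 0)
    (hf₁ : ∀ x : ℝ, f₁ x =
      (2 * x ^ 3 - 6 * a₁ * x ^ 2 + 4 * (a₂ ^ 2 + a₁ ^ 2 - b₁) * x + 4 * a₁ * b₁ + 4 * a₂ * b₂) / D x)
    (hf₂ : ∀ x : ℝ, f₂ x = ((2 * x ^ 2 + 4 * b₁) * a₂ + 4 * b₂ * (x - a₁)) / D x) :
    ∀ x ∈ I,
      deriv (deriv f₁) x =
        -3 * f₁ x * deriv f₁ x + 3 * f₂ x * deriv f₂ x - (f₁ x) ^ 3 + 3 * f₁ x * (f₂ x) ^ 2 ∧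
      deriv (deriv f₂) x =
        -3 * f₂ x * deriv f₁ x - 3 * f₁ x * deriv f₂ x + (f₂ x) ^ 3 - 3 * (f₁ x) ^ 2 * f₂ x :=
  stmt_7_general a₁ a₂ b₁ b₂ D f₁ f₂ hD I hne hf₁ hf₂
end

section
/- Let a₁, b₁, b₂ ∈ ℝ and a₂ > 0. Define D(x) = √((a₁ − 2x)² + a₂²), f₁(x) = √((a₁ − 2x + D(x))/2) + b₁, and f₂(x) = √((2x − a₁ + D(x))/2) + b₂ for x ∈ ℝ. Then for all x ∈ ℝ the pair (f₁, f₂) satisfies f₁″ = f₁′³ − 3f₁′f₂′² and f₂″ = 3f₁′²f₂′ − f₂′³. -/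
/-!
For `a = a₁ + a₂ i` the complex solution `u = √(a - 2x) + b` has `u' = -(a - 2x)^(-1/2)` and
hence `u'' = u'³`; the two equations are its real and imaginary parts. In real terms,
`p t := Re (t + c i)^(-1/2)` satisfies `|Im (t + c i)^(-1/2)| = p (-t)`, so
`d/dt (t + c i)^(-1/2) = -(t + c i)^(-3/2) / 2` becomes `p' = (3 p(t) p(-t)² - p(t)³) / 2`.
Then `f₁' = -p (a₁ - 2x)` and `f₂' = p (2x - a₁)`, and the chain rule finishes.
-/

open Real

/-- The real part of the principal square root of `t + c i`. -/
noncomputable def reSqrt (c t : ℝ) : ℝ := √((t + √(t ^ 2 + c ^ 2)) / 2)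

/-- The real part of `(t + c i)^(-1/2)`, i.e. of `√(t - c i) / |t + c i|`. -/
noncomputable def reInvSqrt (c t : ℝ) : ℝ := reSqrt c t / √(t ^ 2 + c ^ 2)

section
variable {c : ℝ}

theorem abs_lt_sqrt_sq_add_sq (hc : c ≠ 0) (t : ℝ) : |t| < √(t ^ 2 + c ^ 2) := by
  rw [← sqrt_sq_eq_abs]
  exact sqrt_lt_sqrt (sq_nonneg t) (lt_add_of_pos_right _ (by positivity))

theorem sqrt_sq_add_sq_pos (hc : c ≠ 0) (t : ℝ) : 0 < √(t ^ 2 + c ^ 2) :=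
  (abs_nonneg t).trans_lt (abs_lt_sqrt_sq_add_sq hc t)

theorem hasDerivAt_sqrt_sq_add_sq (hc : c ≠ 0) (t : ℝ) :
    HasDerivAt (fun t => √(t ^ 2 + c ^ 2)) (t / √(t ^ 2 + c ^ 2)) t := by
  have hpos : 0 < t ^ 2 + c ^ 2 := by positivity
  convert ((hasDerivAt_pow 2 t).add_const (c ^ 2)).sqrt hpos.ne' using 1
  ring

theorem reSqrt_sq (c t : ℝ) : reSqrt c t ^ 2 = (t + √(t ^ 2 + c ^ 2)) / 2 := by
  have : -t ≤ √(t ^ 2 + c ^ 2) :=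
    (neg_le_abs t).trans (abs_le_sqrt (le_add_of_nonneg_right (sq_nonneg c)))
  exact sq_sqrt (by linarith)

theorem reSqrt_pos (hc : c ≠ 0) (t : ℝ) : 0 < reSqrt c t := by
  have := (neg_le_abs t).trans_lt (abs_lt_sqrt_sq_add_sq hc t)
  exact sqrt_pos.2 (by linarith)

theorem hasDerivAt_reSqrt (hc : c ≠ 0) (t : ℝ) :
    HasDerivAt (reSqrt c) (reInvSqrt c t / 2) t := by
  have hh := reSqrt_pos hc t
  have hsum : HasDerivAt (fun t => (t + √(t ^ 2 + c ^ 2)) / 2)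
      ((1 + t / √(t ^ 2 + c ^ 2)) / 2) t :=
    ((hasDerivAt_id t).add (hasDerivAt_sqrt_sq_add_sq hc t)).div_const 2
  refine (hsum.sqrt (sqrt_pos.1 hh).ne').congr_deriv ?_
  change _ / (2 * reSqrt c t) = reSqrt c t / _ / 2
  field_simp
  linear_combination -2 * reSqrt_sq c t

theorem hasDerivAt_reInvSqrt (hc : c ≠ 0) (t : ℝ) :
    HasDerivAt (reInvSqrt c)
      ((3 * reInvSqrt c t * reInvSqrt c (-t) ^ 2 - reInvSqrt c t ^ 3) / 2) t := by
  have hE := sqrt_sq_add_sq_pos hc t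
  refine ((hasDerivAt_reSqrt hc t).div (hasDerivAt_sqrt_sq_add_sq hc t) hE.ne').congr_deriv ?_
  have h₁ := reSqrt_sq c t
  have h₂ := reSqrt_sq c (-t)
  simp only [reInvSqrt, neg_sq] at h₂ ⊢
  field_simp
  linear_combination -reSqrt c t * (3 * h₂ - h₁)

end

theorem hasDerivAt_comp_mul_add {g g' : ℝ → ℝ} (hg : ∀ t, HasDerivAt g (g' t) t) (k m x : ℝ) :
    HasDerivAt (fun x => g (k * x + m)) (k * g' (k * x + m)) x :=
  ((hg (k * x + m)).comp x (((hasDerivAt_id x).const_mul k).add_const m)).congr_deriv (by ring)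

/-- The explicit real solution (plus branch) of the cubically coupled system (sys3). -/
theorem stmt_10 (a₁ a₂ b₁ b₂ : ℝ) (ha₂ : 0 < a₂) (D f₁ f₂ : ℝ → ℝ)
    (hD : ∀ x : ℝ, D x = Real.sqrt ((a₁ - 2 * x) ^ 2 + a₂ ^ 2))
    (hf₁ : ∀ x : ℝ, f₁ x = Real.sqrt ((a₁ - 2 * x + D x) / 2) + b₁)
    (hf₂ : ∀ x : ℝ, f₂ x = Real.sqrt ((2 * x - a₁ + D x) / 2) + b₂) :
    ∀ x : ℝ,
      deriv (deriv f₁) x = (deriv f₁ x) ^ 3 - 3 * deriv f₁ x * (deriv f₂ x) ^ 2 ∧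
      deriv (deriv f₂) x = 3 * (deriv f₁ x) ^ 2 * deriv f₂ x - (deriv f₂ x) ^ 3 := by
  have hc : a₂ ≠ 0 := ha₂.ne'
  have hf₁' : f₁ = fun x => reSqrt a₂ (-2 * x + a₁) + b₁ := by
    ext x; rw [hf₁, hD, reSqrt]; ring_nf
  have hf₂' : f₂ = fun x => reSqrt a₂ (2 * x + -a₁) + b₂ := by
    ext x; rw [hf₂, hD, reSqrt]; ring_nf
  have hd₁ : deriv f₁ = fun x => -2 * (reInvSqrt a₂ (-2 * x + a₁) / 2) := by
    ext x
    rw [hf₁']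
    exact (hasDerivAt_comp_mul_add (fun t => (hasDerivAt_reSqrt hc t).add_const b₁) _ _ x).deriv
  have hd₂ : deriv f₂ = fun x => 2 * (reInvSqrt a₂ (2 * x + -a₁) / 2) := by
    ext x
    rw [hf₂']
    exact (hasDerivAt_comp_mul_add (fun t => (hasDerivAt_reSqrt hc t).add_const b₂) _ _ x).deriv
  intro x
  have hdd₁ := hasDerivAt_comp_mul_add
    (fun t => ((hasDerivAt_reInvSqrt hc t).div_const 2).const_mul (-2)) (-2) a₁ x
  have hdd₂ := hasDerivAt_comp_mul_add
    (fun t => ((hasDerivAt_reInvSqrt hc t).div_const 2).const_mul 2) 2 (-a₁) x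
  rw [hd₁, hd₂, hdd₁.deriv, hdd₂.deriv]
  have hneg₁ : -(-2 * x + a₁) = 2 * x + -a₁ := by ring
  have hneg₂ : -(2 * x + -a₁) = -2 * x + a₁ := by ring
  rw [hneg₁, hneg₂]
  constructor <;> ring
end

section
/- Let a > 0 and b ∈ ℝ, and define u : ℝ → ℝ by u(x) = arctan(x/√(a − x²)) + b on the open interval I = (−√a, √a). Then u is twice differentiable on I and u″(x) = x·(u′(x))³ for all x ∈ I. -/
/-!
Since `d/dx (x / √(a - x²)) = a / (a - x²)^{3/2}` and `1 + x² / (a - x²) = a / (a - x²)`, the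
first derivative of `u` is `(a - x²)^{-1/2}`; differentiating once more gives
`x (a - x²)^{-3/2} = x u'³`.
-/

open Real Filter Topology

lemma sq_lt_of_mem_Ioo_neg_sqrt {a x : ℝ} (hx : x ∈ Set.Ioo (-√a) √a) : x ^ 2 < a := by
  rw [← sq_abs]
  exact (Real.lt_sqrt (abs_nonneg x)).1 (abs_lt.2 hx)

section SqrtSubSq

variable {a x : ℝ}

lemma hasDerivAt_sqrt_sub_sq (hx : x ^ 2 < a) :
    HasDerivAt (fun y => √(a - y ^ 2)) (-x / √(a - x ^ 2)) x := by
  have h := ((hasDerivAt_pow 2 x).const_sub a).sqrt (sub_pos.2 hx).ne'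
  refine h.congr_deriv ?_
  field_simp
  ring

lemma hasDerivAt_div_sqrt_sub_sq (hx : x ^ 2 < a) :
    HasDerivAt (fun y => y / √(a - y ^ 2)) (a / √(a - x ^ 2) ^ 3) x := by
  have hs : 0 < √(a - x ^ 2) := Real.sqrt_pos.2 (sub_pos.2 hx)
  have hsq : √(a - x ^ 2) ^ 2 = a - x ^ 2 := Real.sq_sqrt (sub_pos.2 hx).le
  refine ((hasDerivAt_id' x).div (hasDerivAt_sqrt_sub_sq hx) hs.ne').congr_deriv ?_
  field_simp
  linear_combination hsq

lemma hasDerivAt_arctan_div_sqrt_sub_sq (hx : x ^ 2 < a) :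
    HasDerivAt (fun y => arctan (y / √(a - y ^ 2))) (√(a - x ^ 2))⁻¹ x := by
  have hs : 0 < √(a - x ^ 2) := Real.sqrt_pos.2 (sub_pos.2 hx)
  have hsq : √(a - x ^ 2) ^ 2 = a - x ^ 2 := Real.sq_sqrt (sub_pos.2 hx).le
  have hne : a - x ^ 2 ≠ 0 := (sub_pos.2 hx).ne'
  have ha : a ≠ 0 := (lt_of_le_of_lt (sq_nonneg x) hx).ne'
  refine ((Real.hasDerivAt_arctan _).comp x (hasDerivAt_div_sqrt_sub_sq hx)).congr_deriv ?_
  rw [div_pow, hsq]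
  field_simp
  rw [sub_add_cancel, mul_div_cancel_left₀ _ ha, hsq]

lemma hasDerivAt_inv_sqrt_sub_sq (hx : x ^ 2 < a) :
    HasDerivAt (fun y => (√(a - y ^ 2))⁻¹) (x * (√(a - x ^ 2))⁻¹ ^ 3) x := by
  have hs : 0 < √(a - x ^ 2) := Real.sqrt_pos.2 (sub_pos.2 hx)
  refine ((hasDerivAt_sqrt_sub_sq hx).inv hs.ne').congr_deriv ?_
  field_simp

end SqrtSubSq

theorem stmt_13_general (a b : ℝ) (u : ℝ → ℝ)
    (hu : ∀ x : ℝ, u x = Real.arctan (x / Real.sqrt (a - x ^ 2)) + b) :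
    (∀ x ∈ Set.Ioo (-Real.sqrt a) (Real.sqrt a),
        DifferentiableAt ℝ u x ∧ DifferentiableAt ℝ (deriv u) x) ∧
    ∀ x ∈ Set.Ioo (-Real.sqrt a) (Real.sqrt a),
        deriv (deriv u) x = x * (deriv u x) ^ 3 := by
  have hu' : u = fun y => arctan (y / √(a - y ^ 2)) + b := funext hu
  have hderiv : ∀ x ∈ Set.Ioo (-√a) √a, HasDerivAt u (√(a - x ^ 2))⁻¹ x := fun x hx => by
    rw [hu']
    exact (hasDerivAt_arctan_div_sqrt_sub_sq (sq_lt_of_mem_Ioo_neg_sqrt hx)).add_const b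
  have hderiv2 : ∀ x ∈ Set.Ioo (-√a) √a,
      HasDerivAt (deriv u) (x * (√(a - x ^ 2))⁻¹ ^ 3) x := fun x hx => by
    have heq : deriv u =ᶠ[𝓝 x] fun y => (√(a - y ^ 2))⁻¹ := by
      filter_upwards [isOpen_Ioo.mem_nhds hx] with y hy
      exact (hderiv y hy).deriv
    exact (hasDerivAt_inv_sqrt_sub_sq (sq_lt_of_mem_Ioo_neg_sqrt hx)).congr_of_eventuallyEq heq
  refine ⟨fun x hx => ⟨(hderiv x hx).differentiableAt, (hderiv2 x hx).differentiableAt⟩,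
    fun x hx => ?_⟩
  rw [(hderiv2 x hx).deriv, (hderiv x hx).deriv]

/-- The function `u(x) = arctan (x / √(a - x²)) + b` solves `u'' = x·u'³`
on `(-√a, √a)`. -/
theorem stmt_13 (a b : ℝ) (ha : 0 < a) (u : ℝ → ℝ)
    (hu : ∀ x : ℝ, u x = Real.arctan (x / Real.sqrt (a - x ^ 2)) + b) :
    (∀ x ∈ Set.Ioo (-Real.sqrt a) (Real.sqrt a),
        DifferentiableAt ℝ u x ∧ DifferentiableAt ℝ (deriv u) x) ∧
    ∀ x ∈ Set.Ioo (-Real.sqrt a) (Real.sqrt a),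
        deriv (deriv u) x = x * (deriv u x) ^ 3 :=
  stmt_13_general a b u hu
end

section
/- Let I ⊆ ℝ be an open interval, let u : ℝ → ℂ be twice differentiable at every point of I, and let g : ℂ → ℂ be twice complex differentiable at every point of u(I) with g(u(x)) = x for all x ∈ I. If deriv (deriv g) (z) = −z for all z ∈ u(I), then u″(x) = u(x)·(u′(x))³ for all x ∈ I. -/
/-!
Differentiating `g (u x) = x` once gives `g'(u) u' = 1`; differentiating again gives
`g''(u) u'² + g'(u) u'' = 0`, and multiplying by `u'` turns this into `u'' = -g''(u) u'³`,
the pullback of the second derivative of an inverse function. For `g''(z) = -z` this is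
`u'' = u u'³`.
-/

open Filter Topology

variable {u : ℝ → ℂ} {g : ℂ → ℂ} {x : ℝ}

theorem deriv_comp_mul_deriv_eq_one_of_eventually_leftInverse
    (hu : DifferentiableAt ℝ u x) (hg : DifferentiableAt ℂ g (u x))
    (hgu : ∀ᶠ y in 𝓝 x, g (u y) = y) :
    deriv g (u x) * deriv u x = 1 := by
  have hcomp : HasDerivAt (g ∘ u) (deriv g (u x) * deriv u x) x :=
    hg.hasDerivAt.comp x hu.hasDerivAt
  have hid : HasDerivAt (fun y : ℝ => (y : ℂ)) 1 x := by
    simpa using (hasDerivAt_id x).ofReal_comp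
  exact hcomp.unique (hid.congr_of_eventuallyEq hgu)

theorem deriv_deriv_eq_neg_mul_pow_three_of_eventually_leftInverse
    (hu : ∀ᶠ y in 𝓝 x, DifferentiableAt ℝ u y) (hu' : DifferentiableAt ℝ (deriv u) x)
    (hg : ∀ᶠ y in 𝓝 x, DifferentiableAt ℂ g (u y)) (hg' : DifferentiableAt ℂ (deriv g) (u x))
    (hgu : ∀ᶠ y in 𝓝 x, g (u y) = y) :
    deriv (deriv u) x = -deriv (deriv g) (u x) * deriv u x ^ 3 := by
  have h_one : ∀ᶠ y in 𝓝 x, deriv g (u y) * deriv u y = 1 := by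
    filter_upwards [hu, hg, eventually_eventually_nhds.mpr hgu] with y huy hgy hguy
    exact deriv_comp_mul_deriv_eq_one_of_eventually_leftInverse huy hgy hguy
  have hprod : HasDerivAt (fun y => deriv g (u y) * deriv u y)
      (deriv (deriv g) (u x) * deriv u x * deriv u x + deriv g (u x) * deriv (deriv u) x) x :=
    (hg'.hasDerivAt.comp x hu.self_of_nhds.hasDerivAt).mul hu'.hasDerivAt
  have hzero : deriv (deriv g) (u x) * deriv u x * deriv u x
      + deriv g (u x) * deriv (deriv u) x = 0 :=
    hprod.unique ((hasDerivAt_const x (1 : ℂ)).congr_of_eventuallyEq h_one)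
  linear_combination deriv u x * hzero - deriv (deriv u) x * h_one.self_of_nhds

theorem stmt_15_general (I : Set ℝ) (hIopen : IsOpen I)
    (u : ℝ → ℂ) (g : ℂ → ℂ)
    (hu : ∀ x ∈ I, DifferentiableAt ℝ u x)
    (hu' : ∀ x ∈ I, DifferentiableAt ℝ (deriv u) x)
    (hg : ∀ x ∈ I, DifferentiableAt ℂ g (u x))
    (hg' : ∀ x ∈ I, DifferentiableAt ℂ (deriv g) (u x))
    (hgu : ∀ x ∈ I, g (u x) = (x : ℂ))
    (hlin : ∀ z ∈ u '' I, deriv (deriv g) z = -z) :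
    ∀ x ∈ I, deriv (deriv u) x = u x * (deriv u x) ^ 3 := by
  intro x hx
  have hI : ∀ᶠ y in 𝓝 x, y ∈ I := hIopen.mem_nhds hx
  rw [deriv_deriv_eq_neg_mul_pow_three_of_eventually_leftInverse (hI.mono hu) (hu' x hx)
    (hI.mono hg) (hg' x hx) (hI.mono hgu), hlin (u x) ⟨x, hx, rfl⟩, neg_neg]

/-- Pulling back the linear equation `g''(z) = -z` along `u` (where `g (u x) = x`)
yields the nonlinear scalar equation `u'' = u·u'³`. -/
theorem stmt_15 (I : Set ℝ) (hIopen : IsOpen I) (hIint : I.OrdConnected)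
    (u : ℝ → ℂ) (g : ℂ → ℂ)
    (hu : ∀ x ∈ I, DifferentiableAt ℝ u x)
    (hu' : ∀ x ∈ I, DifferentiableAt ℝ (deriv u) x)
    (hg : ∀ x ∈ I, DifferentiableAt ℂ g (u x))
    (hg' : ∀ x ∈ I, DifferentiableAt ℂ (deriv g) (u x))
    (hgu : ∀ x ∈ I, g (u x) = (x : ℂ))
    (hlin : ∀ z ∈ u '' I, deriv (deriv g) z = -z) :
    ∀ x ∈ I, deriv (deriv u) x = u x * (deriv u x) ^ 3 :=
  stmt_15_general I hIopen u g hu hu' hg hg' hgu hlin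
end

section
/- Let I ⊆ ℝ be an open interval, let u : ℝ → ℂ be twice differentiable at every point of I, and let g : ℂ → ℂ be twice complex differentiable at every point of u(I) with g(u(x)) = x for all x ∈ I. If deriv (deriv g) (z) = −z·g(z) for all z ∈ u(I) (i.e. g satisfies the Airy-type equation g″(z) + z·g(z) = 0), then u″(x) = x·u(x)·(u′(x))³ for all x ∈ I. -/
/-! Differentiating `g (u x) = x` once gives `u' · g'(u) = 1`, and differentiating that identity
again gives `u'' · g'(u) + u'² · g''(u) = 0`. Multiplying by `u'` and using the first identity
yields `u'' = -u'³ · g''(u)`, and the Airy equation `g''(u) = -u · g(u) = -u · x` finishes. -/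

open Filter Topology

section InverseFunction

variable {𝕜 𝕜' : Type*} [NontriviallyNormedField 𝕜] [NontriviallyNormedField 𝕜']
  [NormedAlgebra 𝕜 𝕜'] {u : 𝕜 → 𝕜'} {g : 𝕜' → 𝕜'} {x : 𝕜}

theorem deriv_mul_deriv_comp_eq_one_of_leftInverse (hu : DifferentiableAt 𝕜 u x)
    (hg : DifferentiableAt 𝕜' g (u x)) (hgu : ∀ᶠ y in 𝓝 x, g (u y) = algebraMap 𝕜 𝕜' y) :
    deriv u x * deriv g (u x) = 1 := by
  have hcomp : HasDerivAt (fun y => g (u y)) (deriv u x • deriv g (u x)) x :=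
    hg.hasDerivAt.scomp x hu.hasDerivAt
  have hcast : HasDerivAt (fun y => algebraMap 𝕜 𝕜' y) 1 x := by
    simpa [Algebra.algebraMap_eq_smul_one] using (hasDerivAt_id x).smul_const (1 : 𝕜')
  simpa using (hcomp.congr_of_eventuallyEq (hgu.mono fun _ h => h.symm)).unique hcast

theorem deriv_deriv_mul_deriv_comp_add_sq_mul_eq_zero (hu : DifferentiableAt 𝕜 u x)
    (hu' : DifferentiableAt 𝕜 (deriv u) x) (hg' : DifferentiableAt 𝕜' (deriv g) (u x))
    (hconst : ∀ᶠ y in 𝓝 x, deriv u y * deriv g (u y) = 1) :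
    deriv (deriv u) x * deriv g (u x) + deriv u x ^ 2 * deriv (deriv g) (u x) = 0 := by
  have hprod : HasDerivAt (fun y => deriv u y • deriv g (u y))
      (deriv u x • (deriv u x • deriv (deriv g) (u x)) + deriv (deriv u) x • deriv g (u x)) x :=
    hu'.hasDerivAt.smul (hg'.hasDerivAt.scomp x hu.hasDerivAt)
  have hzero : HasDerivAt (fun y => deriv u y • deriv g (u y)) 0 x :=
    (hasDerivAt_const x 1).congr_of_eventuallyEq hconst
  have := hprod.unique hzero
  simp only [smul_eq_mul] at this
  linear_combination this

end InverseFunction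

theorem stmt_17_general (I : Set ℝ) (hIopen : IsOpen I)
    (u : ℝ → ℂ) (g : ℂ → ℂ)
    (hu : ∀ x ∈ I, DifferentiableAt ℝ u x)
    (hu' : ∀ x ∈ I, DifferentiableAt ℝ (deriv u) x)
    (hg : ∀ x ∈ I, DifferentiableAt ℂ g (u x))
    (hg' : ∀ x ∈ I, DifferentiableAt ℂ (deriv g) (u x))
    (hgu : ∀ x ∈ I, g (u x) = (x : ℂ))
    (hlin : ∀ z ∈ u '' I, deriv (deriv g) z = -z * g z) :
    ∀ x ∈ I, deriv (deriv u) x = (x : ℂ) * u x * (deriv u x) ^ 3 := by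
  have hfirst : ∀ y ∈ I, deriv u y * deriv g (u y) = 1 := fun y hy =>
    deriv_mul_deriv_comp_eq_one_of_leftInverse (hu y hy) (hg y hy)
      (eventually_of_mem (hIopen.mem_nhds hy) fun z hz => by simpa using hgu z hz)
  intro x hx
  have hsecond := deriv_deriv_mul_deriv_comp_add_sq_mul_eq_zero (hu x hx) (hu' x hx) (hg' x hx)
    (eventually_of_mem (hIopen.mem_nhds hx) hfirst)
  have hairy : deriv (deriv g) (u x) = -u x * x := by
    rw [hlin _ (Set.mem_image_of_mem u hx), hgu x hx]
  linear_combination (-deriv (deriv u) x) * hfirst x hx + deriv u x * hsecond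
    - deriv u x ^ 3 * hairy

/-- Pulling back the Airy-type equation `g''(z) = -z·g(z)` along `u`
(where `g (u x) = x`) yields the nonlinear scalar equation `u'' = x·u·u'³`. -/
theorem stmt_17 (I : Set ℝ) (hIopen : IsOpen I) (hIint : I.OrdConnected)
    (u : ℝ → ℂ) (g : ℂ → ℂ)
    (hu : ∀ x ∈ I, DifferentiableAt ℝ u x)
    (hu' : ∀ x ∈ I, DifferentiableAt ℝ (deriv u) x)
    (hg : ∀ x ∈ I, DifferentiableAt ℂ g (u x))
    (hg' : ∀ x ∈ I, DifferentiableAt ℂ (deriv g) (u x))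
    (hgu : ∀ x ∈ I, g (u x) = (x : ℂ))
    (hlin : ∀ z ∈ u '' I, deriv (deriv g) z = -z * g z) :
    ∀ x ∈ I, deriv (deriv u) x = (x : ℂ) * u x * (deriv u x) ^ 3 :=
  stmt_17_general I hIopen u g hu hu' hg hg' hgu hlin
end
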